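/- For all k ∈ ℤ and nonzero l ∈ ℤ, the commutator identity [a_n(l), x_n⁺(k)] = ([2l]_t/l) · x_n⁺(k+l) holds in M_{2n+1}(R). -/

import Mathlib

/-!
The matrix `a_n(l)` is diagonal, and commuting a diagonal matrix `diag(d)` with a matrix unit
`E_{ab}` multiplies it by `d_a - d_b`. On `E_{n,0}` this factor is `([2l]_t/l)(q^{n-1}z)^l q^l`
and on `E_{0,n̄}` it is `([2l]_t/l)(q^{n-1}z)^l`; since `(q^{n-1}z)^l q^l = (q^n z)^l`, both
coefficients of `x_n⁺(k)` are shifted from `k` to `k + l`.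
-/

noncomputable section

open LaurentPolynomial

/-- The base field `F = ℚ(t)`. -/
abbrev F : Type := RatFunc ℚ

/-- The Laurent polynomial ring `R = F[z, z⁻¹]`. -/
abbrev R : Type := LaurentPolynomial F

/-- The generator `t` of `ℚ(t)`. -/
def t : F := RatFunc.X

/-- `q = t²`, so that `q_n = q^{1/2} = t` for type `B_n⁽¹⁾`. -/
def q : F := t ^ 2

/-- The quantum integer `[m]_t = (t^m − t^{−m})/(t − t^{−1})` in the base `t`. -/
def qit (m : ℤ) : F := (t ^ m - t ^ (-m)) / (t - t⁻¹)

/-- The matrix unit `E_{ab} ∈ M_N(R)` in the 1-based labels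
`v_1,…,v_n,v_0,v_{n̄},…,v_{1̄}` (so `v_0 ↔ n+1`, `v_{ī} ↔ 2n+2−i`). -/
def E (N a b : ℕ) : Matrix (Fin N) (Fin N) R :=
  Matrix.of fun r s => if (r : ℕ) + 1 = a ∧ (s : ℕ) + 1 = b then (1 : R) else 0

/-- The element `(q^c z)^k ∈ R`. -/
def zq (c k : ℤ) : R := C (q ^ (c * k)) * T k

/-- `x_n⁺(k) = (q^n z)^k [2]_t E_{n,0} + (q^{n−1}z)^k E_{0,n̄}` in `M_{2n+1}(R)`. -/
def xpB (n : ℕ) (k : ℤ) : Matrix (Fin (2*n+1)) (Fin (2*n+1)) R :=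
  (zq n k * C (qit 2)) • E (2*n+1) n (n+1) + zq ((n : ℤ) - 1) k • E (2*n+1) (n+1) (n+2)

/-- `x_n⁻(k) = (q^{n−1}z)^k [2]_t E_{n̄,0} + (q^n z)^k E_{0,n}` in `M_{2n+1}(R)`. -/
def xmB (n : ℕ) (k : ℤ) : Matrix (Fin (2*n+1)) (Fin (2*n+1)) R :=
  (zq ((n : ℤ) - 1) k * C (qit 2)) • E (2*n+1) (n+2) (n+1) + zq n k • E (2*n+1) (n+1) n

/-- `a_n(l) = ([2l]_t/l)(q^{n−1}z)^l ((E_{n,n} − q^l E_{0,0}) + (E_{0,0} − q^l E_{n̄,n̄}))`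
in `M_{2n+1}(R)`. -/
def aB (n : ℕ) (l : ℤ) : Matrix (Fin (2*n+1)) (Fin (2*n+1)) R :=
  (C (qit (2 * l) / (l : F)) * zq ((n : ℤ) - 1) l) •
    ((E (2*n+1) n n - C (q ^ l) • E (2*n+1) (n+1) (n+1)) +
     (E (2*n+1) (n+1) (n+1) - C (q ^ l) • E (2*n+1) (n+2) (n+2)))


open Matrix

theorem Matrix.diagonal_mul_single_sub_single_mul_diagonal {ι α : Type*} [Fintype ι]
    [DecidableEq ι] [Ring α] (d : ι → α) (i j : ι) (x : α) :
    diagonal d * single i j x - single i j x * diagonal d = single i j (d i * x - x * d j) := by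
  ext r s
  simp only [sub_apply, diagonal_mul, mul_diagonal, single_apply]
  split_ifs with h
  · rw [h.1, h.2]
  · simp

theorem E_eq_single {N a b : ℕ} (i j : Fin N) (ha : (i : ℕ) + 1 = a) (hb : (j : ℕ) + 1 = b) :
    E N a b = single i j 1 := by
  subst ha hb
  ext r s
  simp only [E, of_apply, single_apply, add_left_inj, Fin.val_inj, eq_comm]

theorem q_ne_zero : q ≠ 0 := by
  simp [q, t, RatFunc.X_ne_zero]

theorem zq_mul_zq (c k l : ℤ) : zq c k * zq c l = zq c (k + l) := by
  rw [zq, zq, zq, mul_add, zpow_add₀ q_ne_zero, map_mul, T_add]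
  ring

theorem zq_sub_one_mul_C_q_zpow (c l : ℤ) : zq (c - 1) l * C (q ^ l) = zq c l := by
  rw [zq, zq, mul_right_comm, ← map_mul, ← zpow_add₀ q_ne_zero, sub_one_mul, sub_add_cancel]

theorem aB_eq_diagonal {n : ℕ} (i j m : Fin (2 * n + 1)) (hi : (i : ℕ) + 1 = n)
    (hj : (j : ℕ) + 1 = n + 1) (hm : (m : ℕ) + 1 = n + 2) (l : ℤ) :
    aB n l = diagonal ((C (qit (2 * l) / (l : F)) * zq ((n : ℤ) - 1) l) •
      (Pi.single i 1 - C (q ^ l) • Pi.single j 1 + (Pi.single j 1 - C (q ^ l) • Pi.single m 1))) := by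
  rw [aB, E_eq_single i i hi hi, E_eq_single j j hj hj, E_eq_single m m hm hm,
    ← diagonal_single, ← diagonal_single, ← diagonal_single, ← diagonal_smul, ← diagonal_smul,
    diagonal_sub, diagonal_sub, diagonal_add, ← diagonal_smul]
  rfl

theorem xpB_eq_single_add_single {n : ℕ} (i j m : Fin (2 * n + 1)) (hi : (i : ℕ) + 1 = n)
    (hj : (j : ℕ) + 1 = n + 1) (hm : (m : ℕ) + 1 = n + 2) (k : ℤ) :
    xpB n k = single i j (zq n k * C (qit 2)) + single j m (zq ((n : ℤ) - 1) k) := by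
  rw [xpB, E_eq_single i j hi hj, E_eq_single j m hj hm, smul_single, smul_single, smul_eq_mul,
    smul_eq_mul, mul_one, mul_one]

theorem aB_xpB_comm_general (n : ℕ) (hn : 2 ≤ n) (k l : ℤ) :
    aB n l * xpB n k - xpB n k * aB n l =
      C (qit (2 * l) / (l : F)) • xpB n (k + l) := by
  -- `Fin` is 0-based, while the labels of `E` are 1-based.
  let i : Fin (2 * n + 1) := ⟨n - 1, by omega⟩
  let j : Fin (2 * n + 1) := ⟨n, by omega⟩
  let m : Fin (2 * n + 1) := ⟨n + 1, by omega⟩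
  have hi : (i : ℕ) + 1 = n := Nat.sub_add_cancel (by omega)
  have hij : i ≠ j := Fin.ne_of_val_ne (by omega : n - 1 ≠ n)
  have hjm : j ≠ m := Fin.ne_of_val_ne (by omega : n ≠ n + 1)
  have him : i ≠ m := Fin.ne_of_val_ne (by omega : n - 1 ≠ n + 1)
  rw [aB_eq_diagonal i j m hi rfl rfl, xpB_eq_single_add_single i j m hi rfl rfl,
    xpB_eq_single_add_single i j m hi rfl rfl, Matrix.mul_add, Matrix.add_mul, add_sub_add_comm,
    diagonal_mul_single_sub_single_mul_diagonal, diagonal_mul_single_sub_single_mul_diagonal,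
    smul_add (C _), smul_single, smul_single, ← zq_mul_zq, ← zq_mul_zq]
  simp only [Pi.smul_apply, Pi.add_apply, Pi.sub_apply, Pi.single_eq_same, smul_eq_mul,
    Pi.single_eq_of_ne hij, Pi.single_eq_of_ne hij.symm, Pi.single_eq_of_ne hjm,
    Pi.single_eq_of_ne hjm.symm, Pi.single_eq_of_ne him, Pi.single_eq_of_ne him.symm]
  refine congrArg₂ (· + ·) (congrArg _ ?_) (congrArg _ ?_)
  · rw [← zq_sub_one_mul_C_q_zpow n l]
    ring
  · ring

/-- `[a_n(l), x_n⁺(k)] = ([2l]_t/l) x_n⁺(k+l)` in `M_{2n+1}(R)`. -/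
theorem aB_xpB_comm (n : ℕ) (hn : 2 ≤ n) (k l : ℤ) (hl : l ≠ 0) :
    aB n l * xpB n k - xpB n k * aB n l =
      C (qit (2 * l) / (l : F)) • xpB n (k + l) :=
  aB_xpB_comm_general n hn k l
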